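/- The maximal equilibrium is Pareto-best among equilibria: let X* be a pure Nash equilibrium such that for every pure Nash equilibrium X' and every agent i, t_i(X') ≤ t_i(X*). Then for every pure Nash equilibrium X' and every agent i, U_i(X') ≤ U_i(X*). -/
import Mathlib


open Finset

/-- Agent `i`'s total accessible data under fair exchange. -/
noncomputable def total {n : ℕ} (X : Fin n → ℝ) (i : Fin n) : ℝ :=
  X i + ∑ j ∈ univ.filter (fun j => j ≠ i), min (X i) (X j)

/-- Agent `i`'s utility. -/
noncomputable def U {n : ℕ} (b : Fin n → ℝ → ℝ) (c : Fin n → ℝ)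
    (X : Fin n → ℝ) (i : Fin n) : ℝ :=
  b i (total X i) - c i * X i

/-- `X` is a (nonnegative) pure Nash equilibrium of the fair-exchange game. -/
def IsNE {n : ℕ} (b : Fin n → ℝ → ℝ) (c : Fin n → ℝ) (X : Fin n → ℝ) : Prop :=
  (∀ i, 0 ≤ X i) ∧
    ∀ i, ∀ y, 0 ≤ y → U b c (Function.update X i y) i ≤ U b c X i

lemma total_eq_sum {n : ℕ} (X : Fin n → ℝ) (i : Fin n) :
    total X i = ∑ k, min (X i) (X k) := by
  unfold total
  rw [filter_ne', ← Finset.add_sum_erase univ _ (mem_univ i), min_self]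

lemma total_nonneg' {n : ℕ} (X : Fin n → ℝ) (h : ∀ j, 0 ≤ X j) (i : Fin n) :
    0 ≤ total X i := by
  rw [total_eq_sum]
  exact Finset.sum_nonneg fun k _ => le_min (h i) (h k)

lemma Fsum_mono {n : ℕ} (X : Fin n → ℝ) :
    Monotone (fun z => ∑ k, min z (X k)) := fun a b h =>
  Finset.sum_le_sum fun k _ => min_le_min h le_rfl

set_option maxHeartbeats 800000 in
/-- Key combinatorial lemma: domination of totals implies domination of the
truncated-sum functions everywhere on `[0, ∞)`. -/
lemma key_dom {n : ℕ} (X' Xs : Fin n → ℝ) (h' : ∀ j, 0 ≤ X' j) (hs : ∀ j, 0 ≤ Xs j)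
    (hdom : ∀ j, (∑ k, min (X' j) (X' k)) ≤ ∑ k, min (Xs j) (Xs k))
    (y : ℝ) (hy0 : 0 ≤ y) :
    (∑ k, min y (X' k)) ≤ ∑ k, min y (Xs k) := by
  by_contra hy
  push_neg at hy
  set F' : ℝ → ℝ := fun z => ∑ k, min z (X' k) with hF'
  set Fs : ℝ → ℝ := fun z => ∑ k, min z (Xs k) with hFs
  have mono' : Monotone F' := Fsum_mono X'
  have monos : Monotone Fs := Fsum_mono Xs
  have cont' : Continuous F' :=
    continuous_finset_sum _ fun k _ => continuous_id.min continuous_const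
  have conts : Continuous Fs :=
    continuous_finset_sum _ fun k _ => continuous_id.min continuous_const
  set S : Set ℝ := Set.Icc 0 y ∩ {z | F' z ≤ Fs z} with hS
  have hScomp : IsCompact S := isCompact_Icc.inter_right (isClosed_le cont' conts)
  have h0S : (0 : ℝ) ∈ S := by
    constructor
    · exact ⟨le_rfl, hy0⟩
    · have e1 : F' 0 = 0 := by
        simp only [hF']
        exact Finset.sum_eq_zero fun k _ => min_eq_left (h' k)
      have e2 : Fs 0 = 0 := by
        simp only [hFs]
        exact Finset.sum_eq_zero fun k _ => min_eq_left (hs k)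
      simp [Set.mem_setOf_eq, e1, e2]
  have hSne : S.Nonempty := ⟨0, h0S⟩
  set y0 : ℝ := sSup S with hy0def
  have hy0S : y0 ∈ S := hScomp.sSup_mem hSne
  have hy0nn : 0 ≤ y0 := hy0S.1.1
  have hy0le : y0 ≤ y := hy0S.1.2
  have hlt : ∀ z, y0 < z → z ≤ y → Fs z < F' z := by
    intro z hz1 hz2
    by_contra hzc
    push_neg at hzc
    have : z ∈ S := ⟨⟨hy0nn.trans hz1.le, hz2⟩, hzc⟩
    exact absurd (le_csSup hScomp.bddAbove this) (not_le.2 hz1)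
  have hy0lty : y0 < y := by
    rcases lt_or_eq_of_le hy0le with h | h
    · exact h
    · exact absurd (h ▸ hy0S.2) (not_le.2 hy)
  -- choose y' just above y0, below all breakpoints above y0
  set cands : Finset ℝ :=
    insert y (((univ.filter fun k => y0 < X' k).image X') ∪
      ((univ.filter fun k => y0 < Xs k).image Xs)) with hcands
  have hcne : cands.Nonempty := ⟨y, mem_insert_self _ _⟩
  set y' : ℝ := cands.min' hcne with hy'def
  have hy'le : y' ≤ y := Finset.min'_le _ _ (mem_insert_self _ _)
  have hy'gt : y0 < y' := by
    have hmem : y' ∈ cands := Finset.min'_mem cands hcne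
    rcases Finset.mem_insert.1 hmem with h | h
    · rw [h]; exact hy0lty
    · rcases Finset.mem_union.1 h with h | h
      · obtain ⟨k, hk, hke⟩ := Finset.mem_image.1 h
        rw [← hke]; exact (Finset.mem_filter.1 hk).2
      · obtain ⟨k, hk, hke⟩ := Finset.mem_image.1 h
        rw [← hke]; exact (Finset.mem_filter.1 hk).2
  have hb' : ∀ k : Fin n, y0 < X' k → y' ≤ X' k := by
    intro k h
    refine Finset.min'_le _ _ (Finset.mem_insert_of_mem (Finset.mem_union_left _
      (Finset.mem_image_of_mem _ ?_)))
    simp [h]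
  have hbs : ∀ k : Fin n, y0 < Xs k → y' ≤ Xs k := by
    intro k h
    refine Finset.min'_le _ _ (Finset.mem_insert_of_mem (Finset.mem_union_right _
      (Finset.mem_image_of_mem _ ?_)))
    simp [h]
  -- linear growth on [y0, y']
  have hcomp : ∀ (X : Fin n → ℝ), (∀ k, y0 < X k → y' ≤ X k) →
      (∑ k, min y' (X k)) - (∑ k, min y0 (X k)) =
        (univ.filter fun k => y0 < X k).card * (y' - y0) := by
    intro X hbX
    rw [← Finset.sum_sub_distrib]
    have : ∀ k ∈ univ, min y' (X k) - min y0 (X k) = if y0 < X k then y' - y0 else 0 := by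
      intro k _
      by_cases h : y0 < X k
      · rw [if_pos h, min_eq_left (hbX k h), min_eq_left h.le]
      · push_neg at h
        rw [if_neg (not_lt.2 h), min_eq_right (h.trans hy'gt.le), min_eq_right h, sub_self]
    rw [Finset.sum_congr rfl this, ← Finset.sum_filter, Finset.sum_const, nsmul_eq_mul]
  have hcomp' := hcomp X' hb'
  have hcomps := hcomp Xs hbs
  have hFy' : Fs y' < F' y' := hlt y' hy'gt hy'le
  have hFy0 : F' y0 ≤ Fs y0 := hy0S.2
  have hdpos : (0:ℝ) < y' - y0 := sub_pos.2 hy'gt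
  have hcard : ((univ.filter fun k => y0 < Xs k).card : ℝ) * (y' - y0) <
      ((univ.filter fun k => y0 < X' k).card : ℝ) * (y' - y0) := by
    have : Fs y' - Fs y0 < F' y' - F' y0 := by
      simp only [hF', hFs] at hFy' hFy0 ⊢
      linarith
    linarith
  have hcardlt : (univ.filter fun k => y0 < Xs k).card <
      (univ.filter fun k => y0 < X' k).card := by
    have := lt_of_mul_lt_mul_right hcard hdpos.le
    exact_mod_cast this
  have hsub : ¬ (univ.filter fun k => y0 < X' k) ⊆ (univ.filter fun k => y0 < Xs k) :=
    fun h => absurd (Finset.card_le_card h) (not_le.2 hcardlt)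
  obtain ⟨j, hj1, hj2⟩ := Finset.not_subset.1 hsub
  have hj1' : y0 < X' j := (Finset.mem_filter.1 hj1).2
  have hj2' : Xs j ≤ y0 := by
    by_contra h
    exact hj2 (Finset.mem_filter.2 ⟨Finset.mem_univ _, lt_of_not_ge h⟩)
  have hchain : Fs (Xs j) < F' (X' j) :=
    calc Fs (Xs j) ≤ Fs y0 := monos hj2'
    _ ≤ Fs y' := monos hy'gt.le
    _ < F' y' := hFy'
    _ ≤ F' (X' j) := mono' (hb' j hj1')
  exact absurd (hdom j) (not_le.2 hchain)

/-- The maximal equilibrium is Pareto-best among equilibria: every agent weakly prefers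
it to any other pure Nash equilibrium. -/
theorem maximal_equilibrium_pareto_best (n : ℕ)
    (b : Fin n → ℝ → ℝ) (c : Fin n → ℝ)
    (hc : ∀ i, 0 < c i)
    (hbc : ∀ i, ContinuousOn (b i) (Set.Ici 0))
    (hbm : ∀ i, MonotoneOn (b i) (Set.Ici 0))
    (hbconc : ∀ i, ConcaveOn ℝ (Set.Ici 0) (b i))
    (Xstar : Fin n → ℝ) (hstar : IsNE b c Xstar)
    (hdom : ∀ X' : Fin n → ℝ, IsNE b c X' → ∀ i, total X' i ≤ total Xstar i) :
    ∀ X' : Fin n → ℝ, IsNE b c X' → ∀ i, U b c X' i ≤ U b c Xstar i := by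
  intro X' hX' i
  obtain ⟨hpos', hne'⟩ := hX'
  obtain ⟨hposs, hnes⟩ := hstar
  have ht' : 0 ≤ total X' i := total_nonneg' X' hpos' i
  have hts : 0 ≤ total Xstar i := total_nonneg' Xstar hposs i
  have htle : total X' i ≤ total Xstar i := hdom X' ⟨hpos', hne'⟩ i
  by_cases hcase : Xstar i ≤ X' i
  · have hb1 : b i (total X' i) ≤ b i (total Xstar i) :=
      hbm i (Set.mem_Ici.2 ht') (Set.mem_Ici.2 hts) htle
    have hc1 : c i * Xstar i ≤ c i * X' i :=
      mul_le_mul_of_nonneg_left hcase (hc i).le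
    unfold U
    linarith
  · push_neg at hcase
    have hdev := hnes i (X' i) (hpos' i)
    have htup : total (Function.update Xstar i (X' i)) i =
        X' i + ∑ j ∈ univ.filter (fun j => j ≠ i), min (X' i) (Xstar j) := by
      unfold total
      rw [Function.update_self]
      congr 1
      refine Finset.sum_congr rfl fun j hj => ?_
      rw [Function.update_of_ne (Finset.mem_filter.1 hj).2]
    have hkey := key_dom X' Xstar hpos' hposs
      (fun j => by
        rw [← total_eq_sum, ← total_eq_sum]
        exact hdom X' ⟨hpos', hne'⟩ j) (X' i) (hpos' i)
    have h1 : total X' i ≤ total (Function.update Xstar i (X' i)) i := by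
      rw [total_eq_sum X' i, htup]
      calc (∑ k, min (X' i) (X' k)) ≤ ∑ k, min (X' i) (Xstar k) := hkey
        _ = X' i + ∑ j ∈ univ.filter (fun j => j ≠ i), min (X' i) (Xstar j) := by
            rw [filter_ne', ← Finset.add_sum_erase univ _ (mem_univ i),
              min_eq_left hcase.le]
    have h2 : 0 ≤ total (Function.update Xstar i (X' i)) i := by
      refine total_nonneg' _ (fun j => ?_) i
      by_cases hji : j = i
      · rw [hji, Function.update_self]; exact hpos' i
      · rw [Function.update_of_ne hji]; exact hposs j
    have hb1 : b i (total X' i) ≤ b i (total (Function.update Xstar i (X' i)) i) :=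
      hbm i (Set.mem_Ici.2 ht') (Set.mem_Ici.2 h2) h1
    have hU : U b c (Function.update Xstar i (X' i)) i =
        b i (total (Function.update Xstar i (X' i)) i) - c i * X' i := by
      unfold U
      rw [Function.update_self]
    calc U b c X' i = b i (total X' i) - c i * X' i := rfl
      _ ≤ b i (total (Function.update Xstar i (X' i)) i) - c i * X' i := by linarith
      _ = U b c (Function.update Xstar i (X' i)) i := hU.symm
      _ ≤ U b c Xstar i := hdev
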